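/- For N finite MDPs sharing S, A, R ∈ [0, R_max], γ ∈ (0,1), weights q_n summing to 1, and for any policy π: ‖V̄^π − V^π_I‖_∞ ≤ γ R_max κ_1 / (1 − γ)², where V̄^π = ∑_n q_n V^π_n, V^π_I is the value function of π in the imaginary MDP with kernel P̄ = ∑_n q_n P_n, and κ_1 = ∑_n q_n κ_{n,I} with κ_{n,I} = max_{π',s} ∑_{s'} |P_n^{π'}(s'|s) − P̄^{π'}(s'|s)|. -/

import Mathlib

/-! Write `P^π` for the state kernel induced by `π`, so that a value function solves
`V = r^π + γ P^π V`. Since `P^π` is stochastic, this gives `‖V_I‖ ≤ R_max / (1 - γ)`, and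
subtracting the equations for `V_n` and `V_I` gives
`V_n - V_I = γ (P_n^π - P̄^π) V_I + γ P_n^π (V_n - V_I)`,
whose first term is at most `γ κ_{n,I} ‖V_I‖`; hence `‖V_n - V_I‖ ≤ γ κ_{n,I} R_max / (1 - γ)²`.
As the `q_n` sum to `1`, `V̄ - V_I = ∑ q_n (V_n - V_I)`, and the triangle inequality concludes. -/

open Finset Filter

variable {S A : Type*}

/-- A stochastic policy: for each state, a probability distribution over actions. -/
def IsPolicy [Fintype A] (pi : S → A → ℝ) : Prop :=
  (∀ s a, 0 ≤ pi s a) ∧ ∀ s, ∑ a, pi s a = 1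

/-- A transition kernel: for each state-action pair, a probability distribution over states. -/
def IsKernel [Fintype S] (P : S → A → S → ℝ) : Prop :=
  (∀ s a s', 0 ≤ P s a s') ∧ ∀ s a, ∑ s', P s a s' = 1

/-- The policy Bellman operator `T^π` for kernel `P`. -/
def Tpol [Fintype S] [Fintype A] (γ : ℝ) (R : S → A → ℝ) (P : S → A → S → ℝ)
    (pi : S → A → ℝ) (V : S → ℝ) (s : S) : ℝ :=
  ∑ a, pi s a * (R s a + γ * ∑ s', P s a s' * V s')

/-- The Bellman optimality operator `T` for kernel `P`. -/
noncomputable def Topt [Fintype S] [Fintype A] [Nonempty A] (γ : ℝ) (R : S → A → ℝ)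
    (P : S → A → S → ℝ) (V : S → ℝ) (s : S) : ℝ :=
  Finset.univ.sup' Finset.univ_nonempty fun a => R s a + γ * ∑ s', P s a s' * V s'

/-- Heterogeneity measure `κ_{m,n}`: the supremum over policies `π` and states `s` of the
ℓ¹-distance between the induced state transition kernels `P_m^π(·|s)` and `P_n^π(·|s)`. -/
noncomputable def kappa [Fintype S] [Fintype A] (Pm Pn : S → A → S → ℝ) : ℝ :=
  sSup {x : ℝ | ∃ pi : S → A → ℝ, ∃ s : S, IsPolicy pi ∧
    x = ∑ s', |(∑ a, pi s a * Pm s a s') - ∑ a, pi s a * Pn s a s'|}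

/-- Sup-norm of a value function on a finite state space. -/
noncomputable def supNorm [Fintype S] [Nonempty S] (V : S → ℝ) : ℝ := ⨆ s, |V s|

lemma abs_sum_mul_le {ι : Type*} [Fintype ι] {w f g : ι → ℝ} (hf : ∀ i, |f i| ≤ g i) :
    |∑ i, w i * f i| ≤ ∑ i, |w i| * g i :=
  calc |∑ i, w i * f i| ≤ ∑ i, |w i * f i| := abs_sum_le_sum_abs _ _
    _ ≤ ∑ i, |w i| * g i := sum_le_sum fun i _ => by
        rw [abs_mul]; exact mul_le_mul_of_nonneg_left (hf i) (abs_nonneg _)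

lemma sum_abs_sub_le_two {ι : Type*} [Fintype ι] {u v : ι → ℝ} (hu0 : ∀ i, 0 ≤ u i)
    (hu1 : ∑ i, u i = 1) (hv0 : ∀ i, 0 ≤ v i) (hv1 : ∑ i, v i = 1) :
    ∑ i, |u i - v i| ≤ 2 :=
  calc ∑ i, |u i - v i| ≤ ∑ i, (u i + v i) := sum_le_sum fun i _ =>
        abs_sub_le_iff.2 ⟨by linarith [hv0 i], by linarith [hu0 i]⟩
    _ = 2 := by rw [sum_add_distrib, hu1, hv1]; norm_num

section SupNorm

variable [Fintype S] [Nonempty S]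

lemma supNorm_le {V : S → ℝ} {c : ℝ} (h : ∀ s, |V s| ≤ c) : supNorm V ≤ c :=
  ciSup_le h

lemma abs_le_supNorm (V : S → ℝ) (s : S) : |V s| ≤ supNorm V :=
  le_ciSup (f := fun s => |V s|) (Set.finite_range _).bddAbove s

end SupNorm

lemma isKernel_weighted_sum [Fintype S] {N : ℕ} {q : Fin N → ℝ} (hq0 : ∀ n, 0 ≤ q n)
    (hq1 : ∑ n, q n = 1) {P : Fin N → S → A → S → ℝ} (hP : ∀ n, IsKernel (P n)) :
    IsKernel fun s a s' => ∑ n, q n * P n s a s' := by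
  refine ⟨fun s a s' => sum_nonneg fun n _ => mul_nonneg (hq0 n) ((hP n).1 s a s'), ?_⟩
  intro s a
  rw [sum_comm]
  simp only [← mul_sum, (hP _).2 s a, mul_one, hq1]

section Kernel

variable [Fintype S] [Fintype A]

def inducedKernel (pi : S → A → ℝ) (P : S → A → S → ℝ) (s s' : S) : ℝ :=
  ∑ a, pi s a * P s a s'

variable {pi : S → A → ℝ} {P P' : S → A → S → ℝ}

lemma inducedKernel_nonneg (hpi : IsPolicy pi) (hP : IsKernel P) (s s' : S) :
    0 ≤ inducedKernel pi P s s' :=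
  sum_nonneg fun a _ => mul_nonneg (hpi.1 s a) (hP.1 s a s')

lemma sum_inducedKernel (hpi : IsPolicy pi) (hP : IsKernel P) (s : S) :
    ∑ s', inducedKernel pi P s s' = 1 := by
  unfold inducedKernel
  rw [sum_comm]
  simp only [← mul_sum, hP.2 s, mul_one, hpi.2 s]

lemma le_kappa (hpi : IsPolicy pi) (hP : IsKernel P) (hP' : IsKernel P') (s : S) :
    ∑ s', |inducedKernel pi P s s' - inducedKernel pi P' s s'| ≤ kappa P P' := by
  refine le_csSup ⟨2, ?_⟩ ⟨pi, s, hpi, rfl⟩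
  rintro x ⟨pi', s, hpi', rfl⟩
  exact sum_abs_sub_le_two (inducedKernel_nonneg hpi' hP s) (sum_inducedKernel hpi' hP s)
    (inducedKernel_nonneg hpi' hP' s) (sum_inducedKernel hpi' hP' s)

lemma kappa_nonneg [Nonempty S] (hpi : IsPolicy pi) (hP : IsKernel P) (hP' : IsKernel P') :
    0 ≤ kappa P P' :=
  (sum_nonneg fun _ _ => abs_nonneg _).trans (le_kappa hpi hP hP' (Classical.arbitrary S))

lemma Tpol_eq (γ : ℝ) (R : S → A → ℝ) (P : S → A → S → ℝ) (pi : S → A → ℝ) (V : S → ℝ)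
    (s : S) :
    Tpol γ R P pi V s = ∑ a, pi s a * R s a + γ * ∑ s', inducedKernel pi P s s' * V s' := by
  simp only [Tpol, inducedKernel, mul_add, sum_add_distrib, mul_sum, sum_mul]
  rw [sum_comm (f := fun s' a => _)]
  congr 1
  exact sum_congr rfl fun a _ => sum_congr rfl fun s' _ => by ring

end Kernel

section Value

variable [Fintype S] [Fintype A] [Nonempty S] {γ : ℝ} {R : S → A → ℝ} {pi : S → A → ℝ}
  {P P' : S → A → S → ℝ}

lemma abs_sum_inducedKernel_mul_le (hpi : IsPolicy pi) (hP : IsKernel P) (V : S → ℝ) (s : S) :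
    |∑ s', inducedKernel pi P s s' * V s'| ≤ supNorm V := by
  refine (abs_sum_mul_le (abs_le_supNorm V)).trans_eq ?_
  simp only [abs_of_nonneg (inducedKernel_nonneg hpi hP s _), ← sum_mul,
    sum_inducedKernel hpi hP s, one_mul]

variable {V V' : S → ℝ}

lemma supNorm_le_of_isFixedPt {Rmax : ℝ} (hγ0 : 0 ≤ γ) (hγ1 : γ < 1)
    (hR : ∀ s a, |R s a| ≤ Rmax) (hpi : IsPolicy pi) (hP : IsKernel P)
    (hV : ∀ s, V s = Tpol γ R P pi V s) :
    supNorm V ≤ Rmax / (1 - γ) := by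
  have hstep : supNorm V ≤ Rmax + γ * supNorm V := supNorm_le fun s => by
    rw [hV s, Tpol_eq]
    have hreward : |∑ a, pi s a * R s a| ≤ Rmax := by
      refine (abs_sum_mul_le (hR s)).trans_eq ?_
      simp only [abs_of_nonneg (hpi.1 s _), ← sum_mul, hpi.2 s, one_mul]
    have hnext := abs_sum_inducedKernel_mul_le hpi hP V s
    calc |∑ a, pi s a * R s a + γ * ∑ s', inducedKernel pi P s s' * V s'|
        ≤ |∑ a, pi s a * R s a| + γ * |∑ s', inducedKernel pi P s s' * V s'| :=
          (abs_add_le _ _).trans_eq (by rw [abs_mul, abs_of_nonneg hγ0])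
      _ ≤ Rmax + γ * supNorm V := by gcongr
  rw [le_div_iff₀ (by linarith)]
  linarith

lemma supNorm_sub_le_of_isFixedPt (hγ0 : 0 ≤ γ) (hγ1 : γ < 1) (hpi : IsPolicy pi)
    (hP : IsKernel P) (hP' : IsKernel P') (hV : ∀ s, V s = Tpol γ R P pi V s)
    (hV' : ∀ s, V' s = Tpol γ R P' pi V' s) :
    supNorm (fun s => V s - V' s) ≤ γ * kappa P P' * supNorm V' / (1 - γ) := by
  set D := supNorm fun s => V s - V' s
  have hstep : D ≤ γ * (kappa P P' * supNorm V') + γ * D := supNorm_le fun s => by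
    have hsplit : V s - V' s = γ * (∑ s', (inducedKernel pi P s s' - inducedKernel pi P' s s')
        * V' s' + ∑ s', inducedKernel pi P s s' * (V s' - V' s')) := by
      rw [hV s, hV' s, Tpol_eq, Tpol_eq, ← sum_add_distrib]
      have hsum : ∑ s', ((inducedKernel pi P s s' - inducedKernel pi P' s s') * V' s'
          + inducedKernel pi P s s' * (V s' - V' s')) = ∑ s', inducedKernel pi P s s' * V s'
          - ∑ s', inducedKernel pi P' s s' * V' s' := by
        rw [← sum_sub_distrib]; exact sum_congr rfl fun _ _ => by ring
      rw [hsum]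
      ring
    have hkernels : |∑ s', (inducedKernel pi P s s' - inducedKernel pi P' s s') * V' s'|
        ≤ kappa P P' * supNorm V' := by
      refine (abs_sum_mul_le (abs_le_supNorm V')).trans ?_
      rw [← sum_mul]
      exact mul_le_mul_of_nonneg_right (le_kappa hpi hP hP' s)
        ((abs_nonneg _).trans (abs_le_supNorm V' s))
    have hvalues := abs_sum_inducedKernel_mul_le hpi hP (fun s => V s - V' s) s
    rw [hsplit, abs_mul, abs_of_nonneg hγ0, ← mul_add]
    gcongr
    exact (abs_add_le _ _).trans (add_le_add hkernels hvalues)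
  rw [le_div_iff₀ (by linarith)]
  linarith

end Value

variable [Fintype S] [Fintype A] [Nonempty S] [Nonempty A]

theorem stmt6 (N : ℕ) (γ Rmax : ℝ) (hγ0 : 0 < γ) (hγ1 : γ < 1)
    (R : S → A → ℝ) (hR : ∀ s a, 0 ≤ R s a ∧ R s a ≤ Rmax)
    (q : Fin N → ℝ) (hq0 : ∀ n, 0 ≤ q n) (hq1 : ∑ n, q n = 1)
    (P : Fin N → S → A → S → ℝ) (hP : ∀ n, IsKernel (P n))
    (Pbar : S → A → S → ℝ) (hPbar : ∀ s a s', Pbar s a s' = ∑ j, q j * P j s a s')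
    (pi : S → A → ℝ) (hpi : IsPolicy pi)
    (Vn : Fin N → S → ℝ) (hVn : ∀ n s, Vn n s = Tpol γ R (P n) pi (Vn n) s)
    (VI : S → ℝ) (hVI : ∀ s, VI s = Tpol γ R Pbar pi VI s) :
    supNorm (fun s => (∑ n, q n * Vn n s) - VI s) ≤
      γ * Rmax * (∑ n, q n * kappa (P n) Pbar) / (1 - γ) ^ 2 := by
  have hPbarK : IsKernel Pbar := by
    have hPbar_eq : Pbar = fun s a s' => ∑ n, q n * P n s a s' := by
      funext s a s'; exact hPbar s a s'
    exact hPbar_eq ▸ isKernel_weighted_sum hq0 hq1 hP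
  have hVI_le : supNorm VI ≤ Rmax / (1 - γ) :=
    supNorm_le_of_isFixedPt hγ0.le hγ1
      (fun s a => abs_le.2 ⟨by linarith [hR s a], (hR s a).2⟩) hpi hPbarK hVI
  have hmodel : ∀ n s, |Vn n s - VI s| ≤ γ * Rmax * kappa (P n) Pbar / (1 - γ) ^ 2 := by
    intro n s
    calc |Vn n s - VI s|
        ≤ γ * kappa (P n) Pbar * supNorm VI / (1 - γ) :=
          (abs_le_supNorm (fun s => Vn n s - VI s) s).trans
            (supNorm_sub_le_of_isFixedPt hγ0.le hγ1 hpi (hP n) hPbarK (hVn n) hVI)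
      _ ≤ γ * kappa (P n) Pbar * (Rmax / (1 - γ)) / (1 - γ) := by
          have := kappa_nonneg hpi (hP n) hPbarK
          gcongr
      _ = γ * Rmax * kappa (P n) Pbar / (1 - γ) ^ 2 := by
          rw [mul_div_assoc', div_div, ← sq]; ring
  refine supNorm_le fun s => ?_
  have hmix : ∑ n, q n * Vn n s - VI s = ∑ n, q n * (Vn n s - VI s) := by
    simp only [mul_sub, sum_sub_distrib, ← sum_mul, hq1, one_mul]
  calc |∑ n, q n * Vn n s - VI s|
      ≤ ∑ n, |q n| * (γ * Rmax * kappa (P n) Pbar / (1 - γ) ^ 2) :=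
        hmix ▸ abs_sum_mul_le (hmodel · s)
    _ = γ * Rmax * (∑ n, q n * kappa (P n) Pbar) / (1 - γ) ^ 2 := by
        simp only [abs_of_nonneg (hq0 _), mul_sum, sum_div]
        exact sum_congr rfl fun n _ => by ring
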